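/- arXiv:2202.03137 — 7 statements merged into one kernel-verified Lean document; each statement's English description precedes it below -/
import Mathlib

section
/- If (A, μ, α) is a Hom-associative algebra, then A with the commutator bracket [a,b] = a·b − b·a and the same twisting map α is a Hom-Lie algebra. -/
/-- A bilinear map, as a predicate on plain two-argument functions. -/
def IsBilin (K : Type*) {M N P : Type*} [Field K] [AddCommGroup M] [Module K M]
    [AddCommGroup N] [Module K N] [AddCommGroup P] [Module K P]
    (b : M → N → P) : Prop :=
  (∀ x, IsLinearMap K (b x)) ∧ (∀ y, IsLinearMap K fun x => b x y)

/-- A Hom-Lie algebra structure: bilinear skew-symmetric bracket `b` and a linear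
twisting map `α` satisfying multiplicativity and the Hom-Jacobi identity. -/
def IsHomLie (K : Type*) {g : Type*} [Field K] [AddCommGroup g] [Module K g]
    (b : g → g → g) (α : g → g) : Prop :=
  IsBilin K b ∧ IsLinearMap K α ∧
  (∀ x y, b x y = - b y x) ∧
  (∀ x y, α (b x y) = b (α x) (α y)) ∧
  (∀ x y z, b (b x y) (α z) + b (b y z) (α x) + b (b z x) (α y) = 0)

/-- A compatible Hom-Lie algebra: both brackets and every linear combination of
them are Hom-Lie brackets with the same twisting map `α`. -/
def IsCompatHomLie (K : Type*) {g : Type*} [Field K] [AddCommGroup g] [Module K g]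
    (b₁ b₂ : g → g → g) (α : g → g) : Prop :=
  IsHomLie K b₁ α ∧ IsHomLie K b₂ α ∧
  ∀ l m : K, IsHomLie K (fun x y => l • b₁ x y + m • b₂ x y) α

/-! The Hom-Jacobi sum of the commutator bracket of any bilinear Hom-algebra `(A, μ, α)` equals the
alternating sum, over the six orderings of `x, y, z`, of the Hom-associator
`(a b) (α c) - (α a) (b c)`. Hom-associativity makes every Hom-associator vanish. -/

section HomAlgebra

variable {K A : Type*} [Field K] [AddCommGroup A] [Module K A]

def commutatorBracket (μ : A → A → A) (a b : A) : A :=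
  μ a b - μ b a

def homAssociator (μ : A → A → A) (α : A → A) (a b c : A) : A :=
  μ (μ a b) (α c) - μ (α a) (μ b c)

theorem IsBilin.commutatorBracket {μ : A → A → A} (hμ : IsBilin K μ) :
    IsBilin K (commutatorBracket μ) :=
  ⟨fun x => (IsLinearMap.mk' _ (hμ.1 x) - IsLinearMap.mk' _ (hμ.2 x)).isLinear,
    fun y => (IsLinearMap.mk' _ (hμ.2 y) - IsLinearMap.mk' _ (hμ.1 y)).isLinear⟩

theorem commutatorBracket_swap (μ : A → A → A) (a b : A) :
    commutatorBracket μ a b = -commutatorBracket μ b a :=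
  (neg_sub _ _).symm

theorem map_commutatorBracket {μ : A → A → A} {α : A → A} (hα : IsLinearMap K α)
    (hmult : ∀ a b, α (μ a b) = μ (α a) (α b)) (a b : A) :
    α (commutatorBracket μ a b) = commutatorBracket μ (α a) (α b) := by
  rw [commutatorBracket, hα.map_sub, hmult, hmult, commutatorBracket]

theorem homJacobi_commutatorBracket {μ : A → A → A} (hμ : IsBilin K μ) (α : A → A) (x y z : A) :
    commutatorBracket μ (commutatorBracket μ x y) (α z)
        + commutatorBracket μ (commutatorBracket μ y z) (α x)
        + commutatorBracket μ (commutatorBracket μ z x) (α y) =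
      homAssociator μ α x y z - homAssociator μ α y x z + homAssociator μ α y z x
        - homAssociator μ α z y x + homAssociator μ α z x y - homAssociator μ α x z y := by
  simp only [commutatorBracket, homAssociator, (hμ.1 _).map_sub, (hμ.2 _).map_sub]
  abel

end HomAlgebra

/-- A Hom-associative algebra gives a Hom-Lie algebra via the commutator bracket. -/
theorem stmt2 {K A : Type*} [Field K] [AddCommGroup A] [Module K A]
    (μ : A → A → A) (α : A → A)
    (hμ : IsBilin K μ) (hα : IsLinearMap K α)
    (hmult : ∀ a b, α (μ a b) = μ (α a) (α b))
    (hassoc : ∀ a b c, μ (μ a b) (α c) = μ (α a) (μ b c)) :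
    IsHomLie K (fun a b => μ a b - μ b a) α := by
  have hassociator : ∀ a b c, homAssociator μ α a b c = 0 := fun a b c =>
    sub_eq_zero.mpr (hassoc a b c)
  refine ⟨hμ.commutatorBracket, hα, commutatorBracket_swap μ, map_commutatorBracket hα hmult,
    fun x y z => ?_⟩
  refine (homJacobi_commutatorBracket hμ α x y z).trans ?_
  simp only [hassociator, sub_zero, add_zero]
end

section
/- If (g, [·,·], α) is a Hom-Lie algebra, then for every n ≥ 0 the triple (g, [·,·]^{(n)} := α^n ∘ [·,·], α^{n+1}) is a Hom-Lie algebra (the n-th derived Hom-Lie algebra). -/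
theorem IsLinearMap.iterate {R M : Type*} [Semiring R] [AddCommMonoid M] [Module R M]
    {f : M → M} (hf : IsLinearMap R f) (n : ℕ) : IsLinearMap R f^[n] := by
  have h := ((hf.mk' f) ^ n).isLinear
  rwa [Module.End.coe_pow] at h

theorem IsBilin.comp_left {K M N P Q : Type*} [Field K] [AddCommGroup M] [Module K M]
    [AddCommGroup N] [Module K N] [AddCommGroup P] [Module K P] [AddCommGroup Q] [Module K Q]
    {b : M → N → P} {f : P → Q} (hb : IsBilin K b) (hf : IsLinearMap K f) :
    IsBilin K fun x y => f (b x y) :=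
  ⟨fun x => ((hf.mk' f).comp ((hb.1 x).mk' _)).isLinear,
    fun y => ((hf.mk' f).comp ((hb.2 y).mk' _)).isLinear⟩

/-- The `n`-th derived Hom-Lie algebra `(g, αⁿ∘b, αⁿ⁺¹)` of a Hom-Lie algebra. -/
theorem stmt3 {K g : Type*} [Field K] [AddCommGroup g] [Module K g]
    (b : g → g → g) (α : g → g) (h : IsHomLie K b α) (n : ℕ) :
    IsHomLie K (fun x y => α^[n] (b x y)) (α^[n+1]) := by
  obtain ⟨hb, hα, hskew, hmul, hjac⟩ := h
  have hαn := hα.iterate n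
  have hmul_iter : ∀ m x y, α^[m] (b x y) = b (α^[m] x) (α^[m] y) :=
    Function.Semiconj₂.iterate hmul
  refine ⟨hb.comp_left hαn, hα.iterate (n + 1), fun x y => ?_, fun x y => ?_, fun x y z => ?_⟩
  · beta_reduce
    rw [hskew, hαn.map_neg]
  · show α^[n + 1] (α^[n] (b x y)) = α^[n] (b (α^[n + 1] x) (α^[n + 1] y))
    rw [← hmul_iter (n + 1)]
    exact (Function.Commute.iterate_iterate_self α (n + 1) n).eq (b x y)
  · -- Each derived Jacobi term is `α^[n] ∘ α^[n]` applied to the corresponding original one.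
    have derived_jacobi_term : ∀ u v w,
        α^[n] (b (α^[n] (b u v)) (α^[n+1] w)) = α^[n] (α^[n] (b (b u v) (α w))) := by
      intro u v w
      rw [Function.iterate_succ_apply, hmul_iter n (b u v) (α w)]
    beta_reduce
    simp only [derived_jacobi_term, ← hαn.map_add, hjac, hαn.map_zero]
end

section
/- If (g, [·,·]_1, [·,·]_2) is a compatible Lie algebra and α : g → g is a Lie algebra homomorphism for both brackets, then (g, α∘[·,·]_1, α∘[·,·]_2, α) is a compatible Hom-Lie algebra. -/
/-- A Lie algebra structure as a predicate. -/
def IsLie (K : Type*) {g : Type*} [Field K] [AddCommGroup g] [Module K g]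
    (b : g → g → g) : Prop :=
  IsBilin K b ∧ (∀ x y, b x y = - b y x) ∧
  (∀ x y z, b (b x y) z + b (b y z) x + b (b z x) y = 0)

/- Yau's twisting principle: a Lie bracket twisted by an endomorphism `α` is a Hom-Lie bracket
with twisting map `α`; the Hom-Jacobi identity is `α ∘ α` applied to the Jacobi identity. Since
`α ∘ (l • b₁ + m • b₂) = l • (α ∘ b₁) + m • (α ∘ b₂)`, twisting commutes with forming linear
combinations of compatible brackets. -/

theorem IsBilin.comp_isLinearMap {K M N P Q : Type*} [Field K] [AddCommGroup M] [Module K M]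
    [AddCommGroup N] [Module K N] [AddCommGroup P] [Module K P] [AddCommGroup Q] [Module K Q]
    {b : M → N → P} {α : P → Q} (hb : IsBilin K b) (hα : IsLinearMap K α) :
    IsBilin K fun x y => α (b x y) :=
  ⟨fun x => ((hα.mk' α).comp ((hb.1 x).mk' _)).isLinear,
    fun y => ((hα.mk' α).comp ((hb.2 y).mk' _)).isLinear⟩

theorem IsLie.isHomLie_comp {K g : Type*} [Field K] [AddCommGroup g] [Module K g]
    {b : g → g → g} {α : g → g} (hb : IsLie K b) (hα : IsLinearMap K α)
    (hm : ∀ x y, α (b x y) = b (α x) (α y)) :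
    IsHomLie K (fun x y => α (b x y)) α := by
  obtain ⟨hbilin, hskew, hjac⟩ := hb
  refine ⟨hbilin.comp_isLinearMap hα, hα, fun x y => ?_, fun x y => congrArg α (hm x y),
    fun x y z => ?_⟩
  · show α (b x y) = -α (b y x)
    rw [hskew, hα.map_neg]
  · show α (b (α (b x y)) (α z)) + α (b (α (b y z)) (α x)) + α (b (α (b z x)) (α y)) = 0
    simp only [← hm]
    rw [← hα.map_add, ← hα.map_add, ← hα.map_add, ← hα.map_add, hjac, hα.map_zero, hα.map_zero]

theorem IsLinearMap.map_linear_combination {K M N : Type*} [Semiring K] [AddCommMonoid M]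
    [Module K M] [AddCommMonoid N] [Module K N] {α : M → N} (hα : IsLinearMap K α) (l m : K) (u v : M) :
    α (l • u + m • v) = l • α u + m • α v := by
  rw [hα.map_add, hα.map_smul, hα.map_smul]

/-- A compatible Lie algebra together with a homomorphism `α` for both brackets
yields, by composition, a compatible Hom-Lie algebra. -/
theorem stmt5 {K g : Type*} [Field K] [AddCommGroup g] [Module K g]
    (b₁ b₂ : g → g → g) (α : g → g)
    (h₁ : IsLie K b₁) (h₂ : IsLie K b₂)
    (hcomp : ∀ l m : K, IsLie K (fun x y => l • b₁ x y + m • b₂ x y))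
    (hα : IsLinearMap K α)
    (hm₁ : ∀ x y, α (b₁ x y) = b₁ (α x) (α y))
    (hm₂ : ∀ x y, α (b₂ x y) = b₂ (α x) (α y)) :
    IsCompatHomLie K (fun x y => α (b₁ x y)) (fun x y => α (b₂ x y)) α := by
  refine ⟨h₁.isHomLie_comp hα hm₁, h₂.isHomLie_comp hα hm₂, fun l m => ?_⟩
  have htwist : (fun x y => l • α (b₁ x y) + m • α (b₂ x y))
      = fun x y => α (l • b₁ x y + m • b₂ x y) := by
    funext x y
    rw [hα.map_linear_combination]
  rw [htwist]
  refine (hcomp l m).isHomLie_comp hα fun x y => ?_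
  rw [hα.map_linear_combination, hm₁, hm₂]
end

section
/- Let N be a Nijenhuis operator on a Hom-Lie algebra (g, [·,·], α). Then the deformed bracket [x,y]_N := [Nx,y] + [x,Ny] − N[x,y] makes (g, [·,·]_N, α) a Hom-Lie algebra, and moreover (g, [·,·], [·,·]_N, α) is a compatible Hom-Lie algebra. -/
section Bilinear

variable {K M N P : Type*} [Field K] [AddCommGroup M] [Module K M]
  [AddCommGroup N] [Module K N] [AddCommGroup P] [Module K P] {b : M → N → P}

namespace IsBilin

theorem map_add_left (hb : IsBilin K b) (x y : M) (z : N) :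
    b (x + y) z = b x z + b y z := (hb.2 z).map_add x y

theorem map_sub_left (hb : IsBilin K b) (x y : M) (z : N) :
    b (x - y) z = b x z - b y z := (hb.2 z).map_sub x y

theorem map_smul_left (hb : IsBilin K b) (c : K) (x : M) (z : N) : b (c • x) z = c • b x z :=
  (hb.2 z).map_smul c x

theorem map_add_right (hb : IsBilin K b) (x : M) (y z : N) :
    b x (y + z) = b x y + b x z := (hb.1 x).map_add y z

theorem map_sub_right (hb : IsBilin K b) (x : M) (y z : N) :
    b x (y - z) = b x y - b x z := (hb.1 x).map_sub y z

theorem map_smul_right (hb : IsBilin K b) (c : K) (x : M) (z : N) : b x (c • z) = c • b x z :=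
  (hb.1 x).map_smul c z

theorem linearCombination (hb : IsBilin K b) {b' : M → N → P} (hb' : IsBilin K b') (l m : K) :
    IsBilin K (fun x y => l • b x y + m • b' x y) := by
  refine ⟨fun x => ⟨fun y z => ?_, fun c y => ?_⟩, fun z => ⟨fun x y => ?_, fun c x => ?_⟩⟩
  · simp only [hb.map_add_right, hb'.map_add_right]; module
  · simp only [hb.map_smul_right, hb'.map_smul_right]; module
  · simp only [hb.map_add_left, hb'.map_add_left]; module
  · simp only [hb.map_smul_left, hb'.map_smul_left]; module

end IsBilin

end Bilinear

section HomLie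

variable {K g : Type*} [Field K] [AddCommGroup g] [Module K g]

theorem isCompatHomLie_of_mixed_jacobi {b₁ b₂ : g → g → g} {α : g → g}
    (h₁ : IsHomLie K b₁ α) (h₂ : IsHomLie K b₂ α)
    (hmix : ∀ x y z, b₁ (b₂ x y) (α z) + b₂ (b₁ x y) (α z) + (b₁ (b₂ y z) (α x) +
      b₂ (b₁ y z) (α x)) + (b₁ (b₂ z x) (α y) + b₂ (b₁ z x) (α y)) = 0) :
    IsCompatHomLie K b₁ b₂ α := by
  obtain ⟨hb₁, hα, hsk₁, hm₁, hJ₁⟩ := h₁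
  obtain ⟨hb₂, -, hsk₂, hm₂, hJ₂⟩ := h₂
  refine ⟨⟨hb₁, hα, hsk₁, hm₁, hJ₁⟩, ⟨hb₂, hα, hsk₂, hm₂, hJ₂⟩, fun l m =>
    ⟨hb₁.linearCombination hb₂ l m, hα, fun x y => ?_, fun x y => ?_, fun x y z => ?_⟩⟩
  · beta_reduce; rw [hsk₁ x y, hsk₂ x y]; module
  · beta_reduce; rw [hα.map_add, hα.map_smul, hα.map_smul, hm₁, hm₂]
  · simp only [hb₁.map_add_left, hb₁.map_smul_left, hb₂.map_add_left, hb₂.map_smul_left]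
    linear_combination (norm := module)
      (l * l) • hJ₁ x y z + (l * m) • hmix x y z + (m * m) • hJ₂ x y z

def deformedBracket (b : g → g → g) (N : g → g) (x y : g) : g :=
  b (N x) y + b x (N y) - N (b x y)

variable {b : g → g → g} {α N : g → g}

theorem IsBilin.deformedBracket (hb : IsBilin K b) (hN : IsLinearMap K N) :
    IsBilin K (deformedBracket b N) := by
  refine ⟨fun x => ⟨fun y z => ?_, fun c y => ?_⟩, fun z => ⟨fun x y => ?_, fun c x => ?_⟩⟩ <;>
    simp only [_root_.deformedBracket, hb.map_add_left, hb.map_add_right, hb.map_smul_left,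
      hb.map_smul_right, hN.map_add, hN.map_smul] <;>
    module

theorem deformedBracket_skew (hN : IsLinearMap K N) (hsk : ∀ x y, b x y = - b y x) (x y : g) :
    deformedBracket b N x y = - deformedBracket b N y x := by
  simp only [deformedBracket]
  rw [hsk (N x) y, hsk x (N y), hsk x y, hN.map_neg]
  abel

theorem map_deformedBracket (hα : IsLinearMap K α) (hm : ∀ x y, α (b x y) = b (α x) (α y))
    (hcomm : ∀ x, α (N x) = N (α x)) (x y : g) :
    α (deformedBracket b N x y) = deformedBracket b N (α x) (α y) := by
  simp only [deformedBracket, hα.map_sub, hα.map_add, hm, hcomm]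

theorem deformedBracket_mixed_jacobi (hb : IsBilin K b) (hN : IsLinearMap K N)
    (hcomm : ∀ x, α (N x) = N (α x))
    (hJ : ∀ x y z, b (b x y) (α z) + b (b y z) (α x) + b (b z x) (α y) = 0) (x y z : g) :
    b (deformedBracket b N x y) (α z) + deformedBracket b N (b x y) (α z) +
      (b (deformedBracket b N y z) (α x) + deformedBracket b N (b y z) (α x)) +
      (b (deformedBracket b N z x) (α y) + deformedBracket b N (b z x) (α y)) = 0 := by
  have J₁ := hJ (N x) y z
  have J₂ := hJ x (N y) z
  have J₃ := hJ x y (N z)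
  simp only [hcomm] at J₁ J₂ J₃
  have NJ := congrArg N (hJ x y z)
  simp only [hN.map_add, hN.map_zero] at NJ
  simp only [deformedBracket, hb.map_add_left, hb.map_sub_left]
  linear_combination (norm := module) J₁ + J₂ + J₃ - NJ

theorem deformedBracket_jacobi (hb : IsBilin K b) (hN : IsLinearMap K N)
    (hcomm : ∀ x, α (N x) = N (α x))
    (hJ : ∀ x y z, b (b x y) (α z) + b (b y z) (α x) + b (b z x) (α y) = 0)
    (hnij : ∀ x y, b (N x) (N y) = N (deformedBracket b N x y)) (x y z : g) :
    deformedBracket b N (deformedBracket b N x y) (α z) +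
      deformedBracket b N (deformedBracket b N y z) (α x) +
      deformedBracket b N (deformedBracket b N z x) (α y) = 0 := by
  have J₁ := hJ (N x) (N y) z
  have J₂ := hJ x (N y) (N z)
  have J₃ := hJ (N x) y (N z)
  simp only [hcomm] at J₁ J₂ J₃
  have NJ₁ := congrArg N (hJ (N x) y z)
  have NJ₂ := congrArg N (hJ x (N y) z)
  have NJ₃ := congrArg N (hJ x y (N z))
  have NNJ := congrArg N (congrArg N (hJ x y z))
  simp only [hN.map_add, hN.map_zero, hcomm] at NJ₁ NJ₂ NJ₃ NNJ
  have B₁ := congrArg (b · (α z)) (hnij x y)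
  have B₂ := congrArg (b · (α x)) (hnij y z)
  have B₃ := congrArg (b · (α y)) (hnij z x)
  simp only [deformedBracket, hN.map_add, hN.map_sub, hb.map_add_left, hb.map_sub_left]
    at B₁ B₂ B₃
  have P₁ := hnij (b x y) (α z)
  have P₂ := hnij (b y z) (α x)
  have P₃ := hnij (b z x) (α y)
  simp only [deformedBracket, hN.map_add, hN.map_sub] at P₁ P₂ P₃
  simp only [deformedBracket, hN.map_add, hN.map_sub, hb.map_add_left, hb.map_sub_left]
  linear_combination (norm := module)
    J₁ + J₂ + J₃ - B₁ - B₂ - B₃ - P₁ - P₂ - P₃ - NJ₁ - NJ₂ - NJ₃ + NNJ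

theorem IsHomLie.deformedBracket (h : IsHomLie K b α) (hN : IsLinearMap K N)
    (hcomm : ∀ x, α (N x) = N (α x))
    (hnij : ∀ x y, b (N x) (N y) = N (deformedBracket b N x y)) :
    IsHomLie K (deformedBracket b N) α :=
  let ⟨hb, hα, hsk, hm, hJ⟩ := h
  ⟨hb.deformedBracket hN, hα, deformedBracket_skew hN hsk, map_deformedBracket hα hm hcomm,
    deformedBracket_jacobi hb hN hcomm hJ hnij⟩

end HomLie

/-- A Nijenhuis operator `N` on a Hom-Lie algebra deforms the bracket to a new
Hom-Lie bracket, and the original and deformed brackets are compatible. -/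
theorem stmt7 {K g : Type*} [Field K] [AddCommGroup g] [Module K g]
    (b : g → g → g) (α : g → g) (N : g → g)
    (h : IsHomLie K b α) (hN : IsLinearMap K N)
    (hcomm : ∀ x, α (N x) = N (α x))
    (hnij : ∀ x y, b (N x) (N y) = N (b (N x) y + b x (N y) - N (b x y))) :
    IsHomLie K (fun x y => b (N x) y + b x (N y) - N (b x y)) α ∧
    IsCompatHomLie K b (fun x y => b (N x) y + b x (N y) - N (b x y)) α := by
  have hdef : IsHomLie K (deformedBracket b N) α := h.deformedBracket hN hcomm hnij
  have ⟨hb, _, _, _, hJ⟩ := h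
  exact ⟨hdef, isCompatHomLie_of_mixed_jacobi h hdef
    (deformedBracket_mixed_jacobi hb hN hcomm hJ)⟩
end

section
/- Let (g, [·,·]_1, [·,·]_2, α) be a compatible Hom-Lie algebra and (V, •_1, •_2, β) a representation of it. Then for all scalars λ, η, the triple (g, λ[·,·]_1 + η[·,·]_2, α) is a Hom-Lie algebra and (V, λ•_1 + η•_2, β) is a representation of it. -/
/-- A representation `(V, ρ, β)` of a Hom-Lie algebra `(g, b, α)`. -/
def IsRep (K : Type*) {g V : Type*} [Field K] [AddCommGroup g] [Module K g]
    [AddCommGroup V] [Module K V]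
    (b : g → g → g) (α : g → g) (ρ : g → V → V) (β : V → V) : Prop :=
  IsBilin K ρ ∧ IsLinearMap K β ∧
  (∀ x v, β (ρ x v) = ρ (α x) (β v)) ∧
  (∀ x y v, ρ (b x y) (β v) = ρ (α x) (ρ y v) - ρ (α y) (ρ x v))

section

variable {K M N P : Type*} [Field K] [AddCommGroup M] [Module K M] [AddCommGroup N] [Module K N]
  [AddCommGroup P] [Module K P]

theorem IsLinearMap.map_smul_add_smul {f : M → N} (hf : IsLinearMap K f) (c d : K) (x y : M) :
    f (c • x + d • y) = c • f x + d • f y := by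
  rw [hf.map_add, hf.map_smul, hf.map_smul]

theorem IsLinearMap.smul_add_smul {f f' : M → N} (hf : IsLinearMap K f) (hf' : IsLinearMap K f')
    (l m : K) : IsLinearMap K fun x => l • f x + m • f' x where
  map_add x y := by rw [hf.map_add, hf'.map_add]; module
  map_smul c x := by rw [hf.map_smul, hf'.map_smul]; module

theorem IsBilin.map_smul_add_smul_left {b : M → N → P} (hb : IsBilin K b) (c d : K) (x y : M)
    (z : N) : b (c • x + d • y) z = c • b x z + d • b y z :=
  (hb.2 z).map_smul_add_smul c d x y

theorem IsBilin.map_smul_add_smul_right {b : M → N → P} (hb : IsBilin K b) (c d : K) (x : M)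
    (y z : N) : b x (c • y + d • z) = c • b x y + d • b x z :=
  (hb.1 x).map_smul_add_smul c d y z

theorem IsBilin.smul_add_smul {b b' : M → N → P} (hb : IsBilin K b) (hb' : IsBilin K b')
    (l m : K) : IsBilin K fun x y => l • b x y + m • b' x y :=
  ⟨fun x => (hb.1 x).smul_add_smul (hb'.1 x) l m, fun y => (hb.2 y).smul_add_smul (hb'.2 y) l m⟩

end

theorem IsRep.smul_add_smul {K g V : Type*} [Field K] [AddCommGroup g] [Module K g]
    [AddCommGroup V] [Module K V]
    {b₁ b₂ : g → g → g} {α : g → g} {ρ₁ ρ₂ : g → V → V} {β : V → V}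
    (h₁ : IsRep K b₁ α ρ₁ β) (h₂ : IsRep K b₂ α ρ₂ β)
    (hc : ∀ x y v, ρ₂ (b₁ x y) (β v) + ρ₁ (b₂ x y) (β v)
      = ρ₁ (α x) (ρ₂ y v) - ρ₂ (α y) (ρ₁ x v)
        + ρ₂ (α x) (ρ₁ y v) - ρ₁ (α y) (ρ₂ x v))
    (l m : K) :
    IsRep K (fun x y => l • b₁ x y + m • b₂ x y) α (fun x v => l • ρ₁ x v + m • ρ₂ x v) β := by
  obtain ⟨hρ₁, hβ, hβρ₁, hrep₁⟩ := h₁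
  obtain ⟨hρ₂, -, hβρ₂, hrep₂⟩ := h₂
  refine ⟨hρ₁.smul_add_smul hρ₂ l m, hβ, fun x v => ?_, fun x y v => ?_⟩
  · rw [hβ.map_smul_add_smul, hβρ₁, hβρ₂]
  · simp only [hρ₁.map_smul_add_smul_left, hρ₂.map_smul_add_smul_left,
      hρ₁.map_smul_add_smul_right, hρ₂.map_smul_add_smul_right, hrep₁, hrep₂]
    linear_combination (norm := module) (l * m) • hc x y v

/-- For a compatible Hom-Lie algebra with representation `(V,ρ₁,ρ₂,β)`, every
linear combination `(g, l·b₁ + m·b₂, α)` is a Hom-Lie algebra and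
`(V, l·ρ₁ + m·ρ₂, β)` is a representation of it. -/
theorem stmt13 {K g V : Type*} [Field K] [AddCommGroup g] [Module K g]
    [AddCommGroup V] [Module K V]
    (b₁ b₂ : g → g → g) (α : g → g) (ρ₁ ρ₂ : g → V → V) (β : V → V)
    (h : IsCompatHomLie K b₁ b₂ α)
    (h₁ : IsRep K b₁ α ρ₁ β) (h₂ : IsRep K b₂ α ρ₂ β)
    (hc : ∀ x y v, ρ₂ (b₁ x y) (β v) + ρ₁ (b₂ x y) (β v)
      = ρ₁ (α x) (ρ₂ y v) - ρ₂ (α y) (ρ₁ x v)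
        + ρ₂ (α x) (ρ₁ y v) - ρ₁ (α y) (ρ₂ x v)) :
    ∀ l m : K,
      IsHomLie K (fun x y => l • b₁ x y + m • b₂ x y) α ∧
      IsRep K (fun x y => l • b₁ x y + m • b₂ x y) α
        (fun x v => l • ρ₁ x v + m • ρ₂ x v) β :=
  fun l m => ⟨h.2.2 l m, h₁.smul_add_smul h₂ hc l m⟩
end

section
/- Let (g, [·,·]_1, [·,·]_2, α) be a compatible Hom-Lie algebra and (V, •_1, •_2, β) a representation. Then g ⊕ V with twisting map α⊕β and brackets [(x,u),(y,v)]_i := ([x,y]_i, x•_i v − y•_i u), i = 1,2, is a compatible Hom-Lie algebra (the semidirect product). -/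
/-!
The bracket on `g × V` is the Hom-Lie semidirect product bracket: its `g`-component is the
Hom-Lie bracket of `g`, and in the `V`-component multiplicativity is `β ∘ ρ = ρ ∘ (α × β)` while
the Hom-Jacobi identity reduces to the representation identity. For compatibility, the
semidirect bracket is linear in the pair `(b, ρ)`, so a linear combination of the two semidirect
brackets is the semidirect bracket of `l • b₁ + m • b₂` with `l • ρ₁ + m • ρ₂`. The latter is a
representation of the former: expanding its representation identity, the `l²` and `m²` terms are
those of `ρ₁` and `ρ₂`, and the `l m` terms are exactly the compatibility condition.
-/

namespace IsBilin

variable {K M N P : Type*} [Field K] [AddCommGroup M] [Module K M] [AddCommGroup N] [Module K N]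
  [AddCommGroup P] [Module K P] {b : M → N → P}

lemma add_left (hb : IsBilin K b) (x x' : M) (y : N) : b (x + x') y = b x y + b x' y :=
  (hb.2 y).map_add x x'

lemma smul_left (hb : IsBilin K b) (c : K) (x : M) (y : N) : b (c • x) y = c • b x y :=
  (hb.2 y).map_smul c x

lemma add_right (hb : IsBilin K b) (x : M) (y y' : N) : b x (y + y') = b x y + b x y' :=
  (hb.1 x).map_add y y'

lemma smul_right (hb : IsBilin K b) (c : K) (x : M) (y : N) : b x (c • y) = c • b x y :=
  (hb.1 x).map_smul c y

lemma sub_right (hb : IsBilin K b) (x : M) (y y' : N) : b x (y - y') = b x y - b x y' :=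
  (hb.1 x).map_sub y y'

lemma linComb {b₁ b₂ : M → N → P} (h₁ : IsBilin K b₁) (h₂ : IsBilin K b₂) (l m : K) :
    IsBilin K fun x y => l • b₁ x y + m • b₂ x y := by
  refine ⟨fun x => ⟨fun v w => ?_, fun c v => ?_⟩, fun v => ⟨fun x y => ?_, fun c x => ?_⟩⟩
  all_goals
    simp only [h₁.add_left, h₁.add_right, h₁.smul_left, h₁.smul_right, h₂.add_left,
      h₂.add_right, h₂.smul_left, h₂.smul_right]
    module

end IsBilin

section Semidirect

variable {K g V : Type*} [Field K] [AddCommGroup g] [Module K g] [AddCommGroup V] [Module K V]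

def semidirectBracket (b : g → g → g) (ρ : g → V → V) : g × V → g × V → g × V :=
  fun p q => (b p.1 q.1, ρ p.1 q.2 - ρ q.1 p.2)

lemma IsBilin.semidirectBracket {b : g → g → g} {ρ : g → V → V} (hb : IsBilin K b)
    (hρ : IsBilin K ρ) : IsBilin K (semidirectBracket b ρ) := by
  refine ⟨fun p => ⟨fun q q' => ?_, fun c q => ?_⟩, fun q => ⟨fun p p' => ?_, fun c p => ?_⟩⟩
  all_goals
    refine Prod.ext ?_ ?_ <;>
    simp only [_root_.semidirectBracket, Prod.fst_add, Prod.snd_add, Prod.smul_fst,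
      Prod.smul_snd, hb.add_left, hb.add_right, hb.smul_left, hb.smul_right, hρ.add_left,
      hρ.add_right, hρ.smul_left, hρ.smul_right]
  all_goals module

lemma IsHomLie.semidirectBracket {b : g → g → g} {α : g → g} {ρ : g → V → V} {β : V → V}
    (hb : IsHomLie K b α) (hρ : IsRep K b α ρ β) :
    IsHomLie K (semidirectBracket b ρ) (Prod.map α β) := by
  obtain ⟨hbil, hα, hskew, hmul, hjac⟩ := hb
  obtain ⟨hρbil, hβ, hint, hrep⟩ := hρ
  refine ⟨hbil.semidirectBracket hρbil, ((hα.mk' α).prodMap (hβ.mk' β)).isLinear,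
    fun p q => ?_, fun p q => ?_, fun p q r => ?_⟩
  · exact Prod.ext (hskew p.1 q.1) (neg_sub _ _).symm
  · refine Prod.ext (hmul p.1 q.1) ?_
    change β (ρ p.1 q.2 - ρ q.1 p.2) = ρ (α p.1) (β q.2) - ρ (α q.1) (β p.2)
    rw [hβ.map_sub, hint, hint]
  · refine Prod.ext (hjac p.1 q.1 r.1) ?_
    change ρ (b p.1 q.1) (β r.2) - ρ (α r.1) (ρ p.1 q.2 - ρ q.1 p.2)
      + (ρ (b q.1 r.1) (β p.2) - ρ (α p.1) (ρ q.1 r.2 - ρ r.1 q.2))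
      + (ρ (b r.1 p.1) (β q.2) - ρ (α q.1) (ρ r.1 p.2 - ρ p.1 r.2)) = 0
    rw [hrep, hrep, hrep, hρbil.sub_right, hρbil.sub_right, hρbil.sub_right]
    abel

lemma IsRep.linComb {b₁ b₂ : g → g → g} {α : g → g} {ρ₁ ρ₂ : g → V → V} {β : V → V}
    (h₁ : IsRep K b₁ α ρ₁ β) (h₂ : IsRep K b₂ α ρ₂ β)
    (hc : ∀ x y v, ρ₂ (b₁ x y) (β v) + ρ₁ (b₂ x y) (β v)
      = ρ₁ (α x) (ρ₂ y v) - ρ₂ (α y) (ρ₁ x v)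
        + ρ₂ (α x) (ρ₁ y v) - ρ₁ (α y) (ρ₂ x v)) (l m : K) :
    IsRep K (fun x y => l • b₁ x y + m • b₂ x y) α (fun x v => l • ρ₁ x v + m • ρ₂ x v) β := by
  obtain ⟨h₁bil, hβ, hint₁, hrep₁⟩ := h₁
  obtain ⟨h₂bil, -, hint₂, hrep₂⟩ := h₂
  refine ⟨h₁bil.linComb h₂bil l m, hβ, fun x v => ?_, fun x y v => ?_⟩
  · simp only [hβ.map_add, hβ.map_smul, hint₁, hint₂]
  · simp only [h₁bil.add_left, h₁bil.add_right, h₁bil.smul_left, h₁bil.smul_right,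
      h₂bil.add_left, h₂bil.add_right, h₂bil.smul_left, h₂bil.smul_right, hrep₁ x y v,
      hrep₂ x y v]
    linear_combination (norm := module) (l * m) • hc x y v

lemma semidirectBracket_linComb (b₁ b₂ : g → g → g) (ρ₁ ρ₂ : g → V → V) (l m : K) :
    (fun p q => l • semidirectBracket b₁ ρ₁ p q + m • semidirectBracket b₂ ρ₂ p q)
      = semidirectBracket (fun x y => l • b₁ x y + m • b₂ x y)
          (fun x v => l • ρ₁ x v + m • ρ₂ x v) := by
  funext p q
  refine Prod.ext rfl ?_
  change l • (ρ₁ p.1 q.2 - ρ₁ q.1 p.2) + m • (ρ₂ p.1 q.2 - ρ₂ q.1 p.2)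
    = (l • ρ₁ p.1 q.2 + m • ρ₂ p.1 q.2) - (l • ρ₁ q.1 p.2 + m • ρ₂ q.1 p.2)
  module

end Semidirect

/-- The semidirect product of a compatible Hom-Lie algebra with a representation
is a compatible Hom-Lie algebra on `g ⊕ V`. -/
theorem stmt14 {K g V : Type*} [Field K] [AddCommGroup g] [Module K g]
    [AddCommGroup V] [Module K V]
    (b₁ b₂ : g → g → g) (α : g → g) (ρ₁ ρ₂ : g → V → V) (β : V → V)
    (h : IsCompatHomLie K b₁ b₂ α)
    (h₁ : IsRep K b₁ α ρ₁ β) (h₂ : IsRep K b₂ α ρ₂ β)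
    (hc : ∀ x y v, ρ₂ (b₁ x y) (β v) + ρ₁ (b₂ x y) (β v)
      = ρ₁ (α x) (ρ₂ y v) - ρ₂ (α y) (ρ₁ x v)
        + ρ₂ (α x) (ρ₁ y v) - ρ₁ (α y) (ρ₂ x v)) :
    IsCompatHomLie K
      (fun p q : g × V => (b₁ p.1 q.1, ρ₁ p.1 q.2 - ρ₁ q.1 p.2))
      (fun p q : g × V => (b₂ p.1 q.1, ρ₂ p.1 q.2 - ρ₂ q.1 p.2))
      (fun p => (α p.1, β p.2)) := by
  obtain ⟨hb₁, hb₂, hcomb⟩ := h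
  refine ⟨hb₁.semidirectBracket h₁, hb₂.semidirectBracket h₂, fun l m => ?_⟩
  have hsum := (hcomb l m).semidirectBracket (h₁.linComb h₂ hc l m)
  rwa [← semidirectBracket_linComb] at hsum
end

section
/- The maps Δ_0(v) = v/2 and Δ_n((f_1,…,f_n)) = f_1 + ⋯ + f_n define a morphism of cochain complexes from the compatible Hom-Lie algebra complex {C^*_c(g,V), δ_c} to the Chevalley-Eilenberg complex {C^*_Hom(g_+, V_+), δ_Hom} of the sum Hom-Lie algebra g_+ = (g, [·,·]_1 + [·,·]_2, α) with coefficients in V_+ = (V, •_1 + •_2, β); i.e., δ_Hom ∘ Δ_n = Δ_{n+1} ∘ δ_c for all n ≥ 0. -/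
/-- The Chevalley-Eilenberg coboundary of a Hom-Lie algebra `(g, b, α)` with
coefficients in a representation `(V, ρ, β)`, on `(n+1)`-cochains:
`(δf)(x₁,…,x_{n+2}) = Σᵢ (-1)^{i+1} α^{n}(xᵢ) • f(x₁,…,x̂ᵢ,…)
  + Σ_{i<j} (-1)^{i+j} f([xᵢ,xⱼ], αx₁, …, α̂xᵢ, …, α̂xⱼ, …)` (indices here 0-based). -/
def ceD (K : Type*) {g V : Type*} [Field K] [AddCommGroup g] [Module K g]
    [AddCommGroup V] [Module K V]
    (b : g → g → g) (α : g → g) (ρ : g → V → V) {n : ℕ}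
    (f : (Fin (n + 1) → g) → V) : (Fin (n + 2) → g) → V :=
  fun x =>
    (∑ i : Fin (n + 2), ((-1 : K) ^ (i : ℕ)) •
        ρ (α^[n] (x i)) (f fun k => x (i.succAbove k)))
    + ∑ i : Fin (n + 2), ∑ j : Fin (n + 2),
        if h : (i : ℕ) < (j : ℕ) then
          ((-1 : K) ^ ((i : ℕ) + (j : ℕ))) •
            f (Fin.cons (b (x i) (x j))
              (fun k => x (i.succAbove ((j.pred (by rintro rfl; simp at h)).succAbove k)) |> α))
        else 0

/-- The coboundary operator of the compatible Hom-Lie algebra complex on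
`n`-tuples of cochains: `δ_c(f₁,…,f_n) = (¹δf₁, …, ¹δfᵢ + ²δf_{i-1}, …, ²δf_n)`. -/
def cD (K : Type*) {g V : Type*} [Field K] [AddCommGroup g] [Module K g]
    [AddCommGroup V] [Module K V]
    (b₁ b₂ : g → g → g) (α : g → g) (ρ₁ ρ₂ : g → V → V) {n m : ℕ}
    (F : Fin n → ((Fin (m + 1) → g) → V)) :
    Fin (n + 1) → ((Fin (m + 2) → g) → V) :=
  fun i =>
    (if h : (i : ℕ) < n then ceD K b₁ α ρ₁ (F ⟨i, h⟩) else 0)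
    + (if h : 0 < (i : ℕ) then
        ceD K b₂ α ρ₂ (F ⟨(i : ℕ) - 1, by have := i.isLt; omega⟩) else 0)


section Aux17
variable {K g V : Type*} [Field K] [AddCommGroup g] [Module K g]
  [AddCommGroup V] [Module K V]

lemma dite_add_zero17 {c : Prop} [Decidable c] (A B : c → V) :
    (if h : c then A h + B h else 0)
      = (if h : c then A h else 0) + (if h : c then B h else 0) := by
  split <;> simp

lemma dite_sum_zero17 {c : Prop} [Decidable c] {N : ℕ} (t : c → Fin N → V) :
    (if h : c then ∑ k, t h k else 0) = ∑ k, if h : c then t h k else 0 := by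
  split <;> simp

lemma ceD_add17 (b₁ b₂ : g → g → g) (α : g → g) (ρ₁ ρ₂ : g → V → V) {m : ℕ}
    (f : (Fin (m + 1) → g) → V)
    (hf : ∀ u v r, f (Fin.cons (u + v) r) = f (Fin.cons u r) + f (Fin.cons v r))
    (x : Fin (m + 2) → g) :
    ceD K (fun a c => b₁ a c + b₂ a c) α (fun a v => ρ₁ a v + ρ₂ a v) f x
      = ceD K b₁ α ρ₁ f x + ceD K b₂ α ρ₂ f x := by
  simp only [ceD, hf, smul_add, dite_add_zero17, Finset.sum_add_distrib]
  abel

lemma ceD_sum17 (b : g → g → g) (α : g → g) (ρ : g → V → V)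
    (hρ : ∀ y, IsLinearMap K (ρ y)) {N m : ℕ}
    (f : Fin N → ((Fin (m + 1) → g) → V)) (x : Fin (m + 2) → g) :
    ceD K b α ρ (fun y => ∑ k, f k y) x = ∑ k, ceD K b α ρ (f k) x := by
  have hmap : ∀ (y : g) (v : Fin N → V), ρ y (∑ k, v k) = ∑ k, ρ y (v k) := by
    intro y v
    exact map_sum (IsLinearMap.mk' _ (hρ y)) _ _
  simp only [ceD, hmap, Finset.smul_sum, dite_sum_zero17, Finset.sum_add_distrib]
  congr 1
  · exact Finset.sum_comm
  · exact Eq.trans (Finset.sum_congr rfl fun i _ => Finset.sum_comm) Finset.sum_comm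

end Aux17

/-- The maps `Δ₀(v) = v/2` and `Δₙ(f₁,…,fₙ) = f₁ + ⋯ + fₙ` define a morphism of
cochain complexes from the compatible Hom-Lie algebra complex to the
Chevalley-Eilenberg complex of the sum Hom-Lie algebra `(g, b₁+b₂, α)` with
coefficients in `(V, ρ₁+ρ₂, β)`: `δ_Hom ∘ Δₙ = Δₙ₊₁ ∘ δ_c`. -/
theorem stmt17 {K g V : Type*} [Field K] [CharZero K] [AddCommGroup g]
    [Module K g] [AddCommGroup V] [Module K V]
    (b₁ b₂ : g → g → g) (α : g → g) (ρ₁ ρ₂ : g → V → V) (β : V → V)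
    (h : IsCompatHomLie K b₁ b₂ α)
    (h₁ : IsRep K b₁ α ρ₁ β) (h₂ : IsRep K b₂ α ρ₂ β)
    (hc : ∀ x y v, ρ₂ (b₁ x y) (β v) + ρ₁ (b₂ x y) (β v)
      = ρ₁ (α x) (ρ₂ y v) - ρ₂ (α y) (ρ₁ x v)
        + ρ₂ (α x) (ρ₁ y v) - ρ₁ (α y) (ρ₂ x v)) :
    (∀ v : V, β v = v → (∀ x, ρ₁ x v = ρ₂ x v) →
      ∀ x : Fin 1 → g,
        ρ₁ (x 0) ((2 : K)⁻¹ • v) + ρ₂ (x 0) ((2 : K)⁻¹ • v) = ρ₁ (x 0) v) ∧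
    ∀ (n m : ℕ) (F : Fin (n + 1) → AlternatingMap K g V (Fin (m + 1))),
      (∀ i x, β (F i x) = F i fun k => α (x k)) →
      ∀ x : Fin (m + 2) → g,
        ceD K (fun a c => b₁ a c + b₂ a c) α (fun a v => ρ₁ a v + ρ₂ a v)
            (fun y => ∑ i, F i y) x
          = ∑ i : Fin (n + 2), cD K b₁ b₂ α ρ₁ ρ₂ (fun i => ⇑(F i)) i x := by
  constructor
  · intro v hb hr x
    rw [(h₁.1.1 (x 0)).map_smul, (h₂.1.1 (x 0)).map_smul, ← hr (x 0), ← add_smul]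
    norm_num
  · intro n m F hbF x
    have hρ₁ : ∀ y, IsLinearMap K (ρ₁ y) := h₁.1.1
    have hρ₂ : ∀ y, IsLinearMap K (ρ₂ y) := h₂.1.1
    have hf : ∀ (u v : g) (r : Fin m → g),
        (∑ i, F i (Fin.cons (u + v) r))
          = (∑ i, F i (Fin.cons u r)) + ∑ i, F i (Fin.cons v r) := by
      intro u v r
      rw [← Finset.sum_add_distrib]
      refine Finset.sum_congr rfl fun i _ => ?_
      calc (F i) (Fin.cons (u + v) r)
          = (F i) (Function.update (Fin.cons u r) 0 (u + v)) := by
            rw [Fin.update_cons_zero]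
        _ = (F i) (Function.update (Fin.cons u r) 0 u)
              + (F i) (Function.update (Fin.cons u r) 0 v) := (F i).map_update_add _ _ _ _
        _ = _ := by rw [Fin.update_cons_zero, Fin.update_cons_zero]
    rw [ceD_add17 b₁ b₂ α ρ₁ ρ₂ _ hf x,
      ceD_sum17 b₁ α ρ₁ hρ₁ (fun i => ⇑(F i)) x,
      ceD_sum17 b₂ α ρ₂ hρ₂ (fun i => ⇑(F i)) x]
    simp only [cD, Pi.add_apply, dite_apply, Pi.zero_apply, Finset.sum_add_distrib]
    congr 1
    · conv_rhs => rw [Fin.sum_univ_castSucc]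
      simp [Fin.is_lt, Fin.is_le]
    · conv_rhs => rw [Fin.sum_univ_succ]
      simp
end
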